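/- The conditional Malliavin estimate of the gamma of the binary Asian option is given by the following Gaussian integral identity: ∫_{ψ}^{∞} (4·e^{−rT}/(σ⁴·S_0²·T²·S_A(x)²)) · ( S_d(x)² − 2·S_d(x)·S_0 + S_0² + ω₀·r·T²·S_A(x)² − 2·r·T·S_d(x)·S_A(x) + 2·ω₀·T·S_0·S_A(x) ) · φ(x) dx = (4·e^{−rT}/(σ⁴·S_0²·T²)) · [ ( S̃_d²/S̃_A² + ω₀·r·T² − 2·r·T·S̃_d/S̃_A )·Φ(−ψ) + (S_0²/S̃_A²)·e^{−2·r·t₁ + 3·σ²·t₁}·Φ(−2·σ·√t₁ − ψ) + ( 2·ω₀·T·S_0/S̃_A − 2·S_0·S̃_d/S̃_A² )·e^{−r·t₁ + σ²·t₁}·Φ(−σ·√t₁ − ψ) ]. -/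
import Mathlib
open MeasureTheory Set

noncomputable def gph (a x : ℝ) : ℝ :=
  Real.exp (-(a * x)) * ((Real.sqrt (2 * Real.pi))⁻¹ * Real.exp (-x ^ 2 / 2))

lemma gph_eq (a : ℝ) : gph a =
    fun x => Real.exp (a ^ 2 / 2) *
      ((Real.sqrt (2 * Real.pi))⁻¹ * Real.exp (-(1/2) * (x + a) ^ 2)) := by
  funext x
  unfold gph
  rw [show -(1/2) * (x + a) ^ 2 = (-(a * x)) + (-x ^ 2 / 2) + (-(a ^ 2 / 2)) by ring,
    Real.exp_add, Real.exp_add, Real.exp_neg (a ^ 2 / 2)]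
  field_simp

lemma gph_integrable (a : ℝ) : Integrable (gph a) := by
  rw [gph_eq]
  have base : Integrable (fun x : ℝ => Real.exp (-(1/2) * x ^ 2)) :=
    integrable_exp_neg_mul_sq (by norm_num)
  have base2 : Integrable (fun x : ℝ => Real.exp (-(1/2) * (x + a) ^ 2)) :=
    base.comp_add_right a
  exact (base2.const_mul _).const_mul _

lemma shift_Ioi (a c : ℝ) (f : ℝ → ℝ) :
    (∫ x in Ioi c, f (x + a)) = ∫ x in Ioi (c + a), f x := by
  have A : MeasurableEmbedding fun x : ℝ => x + a :=
    (Homeomorph.addRight a).isClosedEmbedding.measurableEmbedding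
  have := A.setIntegral_map (μ := volume) f (Ioi (c + a))
  rw [map_add_right_eq_self (volume : Measure ℝ)] at this
  rw [this, preimage_add_const_Ioi]
  norm_num

lemma gph_int (a c : ℝ) : (∫ x in Ioi c, gph a x) =
    Real.exp (a ^ 2 / 2) *
      ∫ u in Iic (-a - c), (Real.sqrt (2 * Real.pi))⁻¹ * Real.exp (-u ^ 2 / 2) := by
  have h1 : (∫ x in Ioi c, gph a x) = Real.exp (a ^ 2 / 2) *
      ∫ x in Ioi c, (Real.sqrt (2 * Real.pi))⁻¹ * Real.exp (-(1/2) * (x + a) ^ 2) := by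
    rw [gph_eq]; exact MeasureTheory.integral_const_mul _ _
  rw [h1]
  congr 1
  have h2 : (∫ x in Ioi c, (Real.sqrt (2 * Real.pi))⁻¹ * Real.exp (-(1/2) * (x + a) ^ 2))
      = ∫ x in Ioi (c + a), (Real.sqrt (2 * Real.pi))⁻¹ * Real.exp (-(1/2) * x ^ 2) :=
    shift_Ioi a c (fun u => (Real.sqrt (2 * Real.pi))⁻¹ * Real.exp (-(1/2) * u ^ 2))
  rw [h2]
  have h3 : (∫ x in Ioi (c + a), (Real.sqrt (2 * Real.pi))⁻¹ * Real.exp (-(1/2) * x ^ 2))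
      = ∫ x in Ioi (c + a),
          (fun u => (Real.sqrt (2 * Real.pi))⁻¹ * Real.exp (-u ^ 2 / 2)) (-x) := by
    refine setIntegral_congr_fun measurableSet_Ioi (fun x _ => ?_)
    simp only [neg_sq]
    ring_nf
  rw [h3, show (-a - c) = -(c + a) by ring]
  exact integral_comp_neg_Ioi (c + a) (fun u => (Real.sqrt (2 * Real.pi))⁻¹ * Real.exp (-u ^ 2 / 2))

theorem stmt_16
    (T S0 σ r : ℝ) (hT : 0 < T) (hS0 : 0 < S0) (hσ : 0 < σ) (hr : 0 < r)
    (d : ℕ) (hd : 2 ≤ d)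
    (A : Fin d → Fin (d - 1) → ℝ) (hA0 : A ⟨0, by omega⟩ = 0)
    (z : Fin (d - 1) → ℝ)
    (ω₀ : ℝ) (hω₀ : ω₀ = r - σ ^ 2 / 2)
    (t1 : ℝ) (ht1 : t1 = T / d)
    (Stil : Fin d → ℝ)
    (hStil : ∀ j : Fin d,
      Stil j = S0 * Real.exp (ω₀ * ((j : ℝ) * T / d) + σ * ∑ k, A j k * z k))
    (StilA : ℝ) (hStilA : StilA = (1 / (d : ℝ)) * ∑ j, Stil j)
    (Stild : ℝ) (hStild : Stild = Stil ⟨d - 1, by omega⟩)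
    (SA Sd : ℝ → ℝ)
    (hSA : ∀ x, SA x = Real.exp (ω₀ * t1 + σ * Real.sqrt t1 * x) * StilA)
    (hSd : ∀ x, Sd x = Real.exp (ω₀ * t1 + σ * Real.sqrt t1 * x) * Stild)
    (φ : ℝ → ℝ) (hφ : ∀ x, φ x = (Real.sqrt (2 * Real.pi))⁻¹ * Real.exp (-x ^ 2 / 2))
    (K : ℝ) (hK : 0 < K)
    (ψ : ℝ) (hψ : ψ = (Real.log K - Real.log StilA - ω₀ * t1) / (σ * Real.sqrt t1))
    (Φ : ℝ → ℝ) (hΦ : ∀ x, Φ x = ∫ u in Set.Iic x, φ u) :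
    (∫ x in Set.Ioi ψ,
        (4 * Real.exp (-r * T) / (σ ^ 4 * S0 ^ 2 * T ^ 2 * (SA x) ^ 2)) *
          ((Sd x) ^ 2 - 2 * Sd x * S0 + S0 ^ 2 + ω₀ * r * T ^ 2 * (SA x) ^ 2
            - 2 * r * T * Sd x * SA x + 2 * ω₀ * T * S0 * SA x) * φ x)
      = (4 * Real.exp (-r * T) / (σ ^ 4 * S0 ^ 2 * T ^ 2)) *
          ((Stild ^ 2 / StilA ^ 2 + ω₀ * r * T ^ 2 - 2 * r * T * Stild / StilA) * Φ (-ψ)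
            + (S0 ^ 2 / StilA ^ 2) * Real.exp (-(2 * r * t1) + 3 * σ ^ 2 * t1)
                * Φ (-(2 * σ * Real.sqrt t1) - ψ)
            + (2 * ω₀ * T * S0 / StilA - 2 * S0 * Stild / StilA ^ 2)
                * Real.exp (-(r * t1) + σ ^ 2 * t1) * Φ (-(σ * Real.sqrt t1) - ψ)) := by
  have hdpos : (0:ℝ) < d := by
    have : (2:ℝ) ≤ (d:ℝ) := by exact_mod_cast hd
    linarith
  have ht1pos : 0 < t1 := ht1 ▸ div_pos hT hdpos
  have hsq : Real.sqrt t1 > 0 := Real.sqrt_pos.mpr ht1pos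
  have hStilpos : ∀ j : Fin d, 0 < Stil j := fun j => by rw [hStil]; positivity
  have hStilApos : 0 < StilA := by
    rw [hStilA]
    have : Nonempty (Fin d) := ⟨⟨0, by omega⟩⟩
    exact mul_pos (by positivity) (Finset.sum_pos (fun j _ => hStilpos j) Finset.univ_nonempty)
  set a := σ * Real.sqrt t1 with ha
  have hapos : 0 < a := mul_pos hσ hsq
  have ha2 : a ^ 2 = σ ^ 2 * t1 := by
    rw [ha, mul_pow, Real.sq_sqrt ht1pos.le]
  set D := 4 * Real.exp (-r * T) / (σ ^ 4 * S0 ^ 2 * T ^ 2) with hD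
  set c0 := Stild ^ 2 / StilA ^ 2 + ω₀ * r * T ^ 2 - 2 * r * T * Stild / StilA with hc0
  set c1 := 2 * ω₀ * T * S0 / StilA - 2 * S0 * Stild / StilA ^ 2 with hc1
  set c2 := S0 ^ 2 / StilA ^ 2 with hc2
  have hcongr : ∀ x ∈ Set.Ioi ψ,
      (4 * Real.exp (-r * T) / (σ ^ 4 * S0 ^ 2 * T ^ 2 * (SA x) ^ 2)) *
          ((Sd x) ^ 2 - 2 * Sd x * S0 + S0 ^ 2 + ω₀ * r * T ^ 2 * (SA x) ^ 2
            - 2 * r * T * Sd x * SA x + 2 * ω₀ * T * S0 * SA x) * φ x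
        = (D * c0) * gph 0 x +
            ((D * c1 * Real.exp (-(ω₀ * t1))) * gph a x +
             (D * c2 * Real.exp (-(2 * (ω₀ * t1)))) * gph (2 * a) x) := by
    intro x _
    rw [hSA, hSd, hφ]
    unfold gph
    rw [Real.exp_add (ω₀ * t1) (a * x)]
    rw [show -(2 * a * x) = -(a * x) + -(a * x) by ring, Real.exp_add,
      show -(2 * (ω₀ * t1)) = -(ω₀ * t1) + -(ω₀ * t1) by ring, Real.exp_add]
    rw [Real.exp_neg (a * x), Real.exp_neg (ω₀ * t1)]
    simp only [zero_mul, neg_zero, Real.exp_zero]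
    have h1 : Real.exp (ω₀ * t1) ≠ 0 := Real.exp_ne_zero _
    have h2 : Real.exp (a * x) ≠ 0 := Real.exp_ne_zero _
    have h3 : StilA ≠ 0 := ne_of_gt hStilApos
    have h4 : σ ≠ 0 := ne_of_gt hσ
    have h5 : S0 ≠ 0 := ne_of_gt hS0
    have h6 : T ≠ 0 := ne_of_gt hT
    rw [hD, hc0, hc1, hc2]
    field_simp
    ring
  rw [setIntegral_congr_fun measurableSet_Ioi hcongr]
  have i0 : IntegrableOn (fun x => (D * c0) * gph 0 x) (Set.Ioi ψ) :=
    ((gph_integrable 0).const_mul _).integrableOn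
  have i1 : IntegrableOn (fun x => (D * c1 * Real.exp (-(ω₀ * t1))) * gph a x) (Set.Ioi ψ) :=
    ((gph_integrable a).const_mul _).integrableOn
  have i2 : IntegrableOn (fun x => (D * c2 * Real.exp (-(2 * (ω₀ * t1)))) * gph (2 * a) x)
      (Set.Ioi ψ) := ((gph_integrable (2 * a)).const_mul _).integrableOn
  have i12 : IntegrableOn (fun x => (D * c1 * Real.exp (-(ω₀ * t1))) * gph a x
      + (D * c2 * Real.exp (-(2 * (ω₀ * t1)))) * gph (2 * a) x) (Set.Ioi ψ) := i1.add i2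
  rw [integral_add i0 i12, integral_add i1 i2,
    MeasureTheory.integral_const_mul, MeasureTheory.integral_const_mul,
    MeasureTheory.integral_const_mul, gph_int 0 ψ, gph_int a ψ, gph_int (2 * a) ψ]
  rw [show (-(0:ℝ) - ψ) = -ψ by ring]
  rw [show ((0:ℝ) ^ 2 / 2) = 0 by norm_num, Real.exp_zero]
  have e2 : -(2 * σ * Real.sqrt t1) - ψ = -(2 * a) - ψ := by rw [ha]; ring
  simp only [hΦ, hφ, e2]
  set I0 := ∫ u in Set.Iic (-ψ), (Real.sqrt (2 * Real.pi))⁻¹ * Real.exp (-u ^ 2 / 2) with hI0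
  set I1 := ∫ u in Set.Iic (-a - ψ), (Real.sqrt (2 * Real.pi))⁻¹ * Real.exp (-u ^ 2 / 2) with hI1
  set I2 := ∫ u in Set.Iic (-(2 * a) - ψ), (Real.sqrt (2 * Real.pi))⁻¹ * Real.exp (-u ^ 2 / 2)
    with hI2
  have hx1 : Real.exp (-(ω₀ * t1)) * Real.exp (a ^ 2 / 2) = Real.exp (-(r * t1) + σ ^ 2 * t1) := by
    rw [← Real.exp_add]; congr 1; rw [ha2, hω₀]; ring
  have hx2 : Real.exp (-(2 * (ω₀ * t1))) * Real.exp ((2 * a) ^ 2 / 2)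
      = Real.exp (-(2 * r * t1) + 3 * σ ^ 2 * t1) := by
    rw [← Real.exp_add]; congr 1
    rw [show ((2*a)^2 : ℝ) = 4 * a ^ 2 by ring, ha2, hω₀]; ring
  linear_combination (D * c1 * I1) * hx1 + (D * c2 * I2) * hx2
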